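/- Let p ≥ 3, n ≥ 6 and let V be a finite-dimensional FΣ_n-module. Let x_{2^2} = Σ_{g ∈ Σ_{3,3}} sgn(g) · g(2,5)(3,6)g^{-1} ∈ FΣ_n, where Σ_{3,3} is the Young subgroup permuting {1,2,3} and {4,5,6} and (2,5)(3,6) is the indicated product of transpositions. If x_{2^2}V ≠ 0, then there exists an FΣ_n-homomorphism ψ : M^{(n-4,2,2)} → End_F(V) which does not vanish on the Specht module S^{(n-4,2,2)} ⊆ M^{(n-4,2,2)}. -/

import Mathlib

open scoped Classical

noncomputable section

namespace IrrTensor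

/-! ### Partitions as finitely supported functions `ℕ →₀ ℕ` (0-indexed rows) -/

abbrev Ptn := ℕ →₀ ℕ

/-- `f` is weakly decreasing, i.e. a genuine partition shape. -/
def IsPtn (f : Ptn) : Prop := ∀ ⦃i j : ℕ⦄, i ≤ j → f j ≤ f i

/-- `f` is a partition of `n`. -/
def IsPtnOf (f : Ptn) (n : ℕ) : Prop := IsPtn f ∧ f.sum (fun _ m => m) = n

/-- `p`-regular: no (positive) part is repeated `p` or more times. -/
def PReg (p : ℕ) (f : Ptn) : Prop :=
  ∀ v : ℕ, 0 < v → (f.support.filter (fun i => f i = v)).card < p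

/-- the number of (nonzero) parts of `f`. -/
def height (f : Ptn) : ℕ := f.support.card

/-- row `r` carries a removable node, namely `(r, f r - 1)` (0-indexed). -/
def RemovableAt (f : Ptn) (r : ℕ) : Prop := f (r + 1) < f r

/-- row `r` carries an addable node, namely `(r, f r)` (0-indexed). -/
def AddableAt (f : Ptn) (r : ℕ) : Prop := r = 0 ∨ f r < f (r - 1)

/-- residue of the removable node in row `r` (the residue of a node `(r, c)`,
both coordinates 0-indexed, is `c - r` mod `p`). -/
def resRem (p : ℕ) (f : Ptn) (r : ℕ) : ZMod p := ((f r - 1 : ℕ) : ZMod p) - (r : ZMod p)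

/-- residue of the addable node in row `r`. -/
def resAdd (p : ℕ) (f : Ptn) (r : ℕ) : ZMod p := ((f r : ℕ) : ZMod p) - (r : ZMod p)

/-- The removable node in row `r` is *normal*: every addable node of the same residue
strictly above it can be matched injectively with a distinct removable node of the same
residue strictly between them (the usual lattice/parenthesis condition). -/
def NormalAt (p : ℕ) (f : Ptn) (r : ℕ) : Prop :=
  RemovableAt f r ∧ ∃ m : ℕ → ℕ,
    Set.InjOn m {s | s < r ∧ AddableAt f s ∧ resAdd p f s = resRem p f r} ∧
    ∀ s, s < r → AddableAt f s → resAdd p f s = resRem p f r →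
      s < m s ∧ m s < r ∧ RemovableAt f (m s) ∧ resRem p f (m s) = resRem p f r

/-- The addable node in row `r` is *conormal* (the dual condition). -/
def ConormalAt (p : ℕ) (f : Ptn) (r : ℕ) : Prop :=
  AddableAt f r ∧ ∃ m : ℕ → ℕ,
    Set.InjOn m {s | r < s ∧ RemovableAt f s ∧ resRem p f s = resAdd p f r} ∧
    ∀ s, r < s → RemovableAt f s → resRem p f s = resAdd p f r →
      r < m s ∧ m s < s ∧ AddableAt f (m s) ∧ resAdd p f (m s) = resAdd p f r

/-- rows carrying a normal node of residue `i`. -/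
def normalRows (p : ℕ) (i : ZMod p) (f : Ptn) : Finset ℕ :=
  f.support.filter (fun r => NormalAt p f r ∧ resRem p f r = i)

/-- `ε_i(f)`: the number of normal nodes of residue `i`. -/
def eps (p : ℕ) (i : ZMod p) (f : Ptn) : ℕ := (normalRows p i f).card

/-- total number of normal nodes. -/
def normalCount (p : ℕ) (f : Ptn) : ℕ :=
  (f.support.filter (fun r => NormalAt p f r)).card

/-- JS-partition: exactly one normal node. -/
def IsJS (p : ℕ) (f : Ptn) : Prop := normalCount p f = 1

/-- remove a node from row `r`. -/
def removeAt (f : Ptn) (r : ℕ) : Ptn := f.update r (f r - 1)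

/-- `ẽ_i f`: remove the bottom normal node of residue `i` (junk value `f` if none). -/
def etilde (p : ℕ) (i : ZMod p) (f : Ptn) : Ptn :=
  if h : (normalRows p i f).Nonempty then removeAt f ((normalRows p i f).max' h) else f

def removableRows (f : Ptn) : Finset ℕ := f.support.filter (fun r => RemovableAt f r)

/-- remove the top removable node. -/
def removeTopNode (f : Ptn) : Ptn :=
  if h : (removableRows f).Nonempty then removeAt f ((removableRows f).min' h) else f

/-- add the bottom addable node (a new row of length 1 at the bottom). -/
def addBottomNode (f : Ptn) : Ptn := f.update f.support.card (f f.support.card + 1)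

/-- strict lexicographic order on partitions: `f <lex g`. -/
def lexLT (f g : Ptn) : Prop := ∃ k : ℕ, (∀ i < k, f i = g i) ∧ f k < g k

def lexLE (f g : Ptn) : Prop := f = g ∨ lexLT f g

/-- the number of nodes of `f` of residue `i` (the residue content). -/
def cnt (p : ℕ) (f : Ptn) (i : ZMod p) : ℕ :=
  ∑ r ∈ f.support, ((Finset.range (f r)).filter (fun c => ((c : ZMod p) - (r : ZMod p)) = i)).card

/-- the two-row partition `(a, b)`. -/
def twoRow (a b : ℕ) : Ptn := Finsupp.single 0 a + Finsupp.single 1 b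

/-- the three-row partition `(a, b, c)`. -/
def threeRow (a b c : ℕ) : Ptn :=
  Finsupp.single 0 a + Finsupp.single 1 b + Finsupp.single 2 c

/-! ### Representation-theoretic generalities -/

variable {F : Type} [Field F] {G : Type} [Group G]
variable {V W : Type} [AddCommGroup V] [Module F V] [AddCommGroup W] [Module F W]

/-- `U` is a subrepresentation of `ρ`. -/
def IsSubrep (ρ : Representation F G V) (U : Submodule F V) : Prop :=
  ∀ (g : G), ∀ v ∈ U, ρ g v ∈ U

/-- the representation induced on a subrepresentation. -/
def subRepn (ρ : Representation F G V) (U : Submodule F V) (h : IsSubrep ρ U) :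
    Representation F G ↥U where
  toFun g := (ρ g).restrict (fun v hv => h g v hv)
  map_one' := by
    ext v
    simp [LinearMap.restrict_apply]
  map_mul' g₁ g₂ := by
    ext v
    simp [LinearMap.restrict_apply]

/-- `f` is a homomorphism of representations from `ρ` to `σ`. -/
def IsRepHom (ρ : Representation F G V) (σ : Representation F G W) (f : V →ₗ[F] W) : Prop :=
  ∀ (g : G) (v : V), f (ρ g v) = σ g (f v)

/-- `ρ ≅ σ` as representations. -/
def RepIso (ρ : Representation F G V) (σ : Representation F G W) : Prop :=
  ∃ e : V ≃ₗ[F] W, IsRepHom ρ σ e.toLinearMap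

/-- irreducibility of a representation. -/
def Irr (ρ : Representation F G V) : Prop :=
  (⊥ : Submodule F V) ≠ ⊤ ∧ ∀ U : Submodule F V, IsSubrep ρ U → U = ⊥ ∨ U = ⊤

/-- the `F`-space of homomorphisms of representations `ρ → σ`. -/
def repHom (ρ : Representation F G V) (σ : Representation F G W) :
    Submodule F (V →ₗ[F] W) where
  carrier := {f | IsRepHom ρ σ f}
  add_mem' := by
    intro f g hf hg gg v
    simp only [LinearMap.add_apply, hf gg v, hg gg v, map_add]
  zero_mem' := by intro g v; simp
  smul_mem' := by
    intro c f hf g v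
    simp only [LinearMap.smul_apply, hf g v, map_smul]

/-- `dim Hom_G(ρ, σ)`. -/
def homDim (ρ : Representation F G V) (σ : Representation F G W) : ℕ :=
  Module.finrank F (repHom ρ σ)

/-- `dim End_G(ρ)`. -/
def endDim (ρ : Representation F G V) : ℕ := homDim ρ ρ

/-- restriction of a representation to a subgroup. -/
def resRep (ρ : Representation F G V) (H : Subgroup G) : Representation F H V :=
  ρ.comp H.subtype

/-- a bundled representation of `G` over `F`. -/
structure RepOb (F : Type) [Field F] (G : Type) [Group G] where
  carrier : Type
  [acg : AddCommGroup carrier]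
  [mod : Module F carrier]
  rep : Representation F G carrier

attribute [instance] RepOb.acg RepOb.mod

def RepOb.of (ρ : Representation F G V) : RepOb F G :=
  { carrier := V, rep := ρ }

/-- direct sum of two representations. -/
def prodRep (ρ : Representation F G V) (σ : Representation F G W) :
    Representation F G (V × W) where
  toFun g := (ρ g).prodMap (σ g)
  map_one' := by
    ext v <;> simp
  map_mul' g h := by
    ext v <;> simp

/-- direct sum of a family of representations. -/
def piRep {ι : Type} (M : ι → RepOb F G) : Representation F G (∀ i, (M i).carrier) where
  toFun g := LinearMap.pi fun i => ((M i).rep g).comp (LinearMap.proj i)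
  map_one' := by
    ext v i
    simp
  map_mul' g h := by
    ext v i
    simp

/-- `σ` is (isomorphic to) a composition factor of `ρ`, i.e. a quotient of a
subrepresentation. -/
def IsCompFactor (ρ : Representation F G V) (σ : Representation F G W) : Prop :=
  ∃ (U : Submodule F V) (hU : IsSubrep ρ U) (ψ : ↥U →ₗ[F] W),
    Function.Surjective ψ ∧ IsRepHom (subRepn ρ U hU) σ ψ

/-- `σ` embeds into `ρ` (is isomorphic to a subrepresentation). -/
def Embeds (σ : Representation F G W) (ρ : Representation F G V) : Prop :=
  ∃ f : W →ₗ[F] V, Function.Injective f ∧ IsRepHom σ ρ f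

/-- `σ` is a quotient of `ρ`. -/
def IsQuotientRep (ρ : Representation F G V) (σ : Representation F G W) : Prop :=
  ∃ f : V →ₗ[F] W, Function.Surjective f ∧ IsRepHom ρ σ f

/-- `σ` is a direct summand of `ρ`. -/
def IsSummandRep (ρ : Representation F G V) (σ : Representation F G W) : Prop :=
  ∃ C : RepOb F G, RepIso ρ (prodRep σ C.rep)

/-- `U` is a simple subrepresentation. -/
def IsSimpleSubrep (ρ : Representation F G V) (U : Submodule F V) : Prop :=
  IsSubrep ρ U ∧ U ≠ ⊥ ∧ ∀ U' ≤ U, IsSubrep ρ U' → U' = ⊥ ∨ U' = U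

/-- the socle: the sum of all simple subrepresentations. -/
def socle (ρ : Representation F G V) : Submodule F V := sSup {U | IsSimpleSubrep ρ U}

/-- `ρ` has simple socle. -/
def HasSimpleSocle (ρ : Representation F G V) : Prop := IsSimpleSubrep ρ (socle ρ)

/-! ### Symmetric and alternating groups, Young subgroups, permutation and Specht modules -/

/-- the sign representation of the symmetric group. -/
def sgnRep (F : Type) [Field F] (n : ℕ) : Representation F (Equiv.Perm (Fin n)) F where
  toFun g := ((Equiv.Perm.sign g : ℤ) : F) • LinearMap.id
  map_one' := by
    simp [Module.End.one_eq_id]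
  map_mul' g h := by
    ext
    simp [mul_comm, mul_assoc, mul_smul]

/-- restriction of a representation of `Σ_n` to the alternating group `A_n`. -/
def resAlt {n : ℕ} (ρ : Representation F (Equiv.Perm (Fin n)) V) :
    Representation F (alternatingGroup (Fin n)) V :=
  ρ.comp (alternatingGroup (Fin n)).subtype

/-- transport of permutations along an equivalence, as a monoid homomorphism. -/
def permCongrHom {α β : Type} (e : α ≃ β) : Equiv.Perm α →* Equiv.Perm β where
  toFun g := (e.symm.trans g).trans e
  map_one' := by ext x; simp
  map_mul' g h := by ext x; simp

/-- the standard embedding `Σ_a × Σ_b → Σ_n` (for `a + b = n`), with `Σ_a` acting on the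
first `a` points and `Σ_b` on the last `b` points; its image is the Young subgroup
`Σ_{(a,b)}`. -/
def youngPairHom (a b n : ℕ) (h : a + b = n) :
    Equiv.Perm (Fin a) × Equiv.Perm (Fin b) →* Equiv.Perm (Fin n) :=
  (permCongrHom (finSumFinEquiv.trans (finCongr h))).comp (Equiv.Perm.sumCongrHom (Fin a) (Fin b))

/-- the standard embedding `Σ_m → Σ_n` for `m ≤ n`. -/
def stdEmbed (m n : ℕ) (h : m + (n - m) = n) : Equiv.Perm (Fin m) →* Equiv.Perm (Fin n) :=
  (youngPairHom m (n - m) n h).comp (MonoidHom.inl _ _)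

/-- the outer tensor product of a representation of `A` and one of `B`, as a
representation of `A × B`. -/
def outerTensor {A B : Type} [Group A] [Group B]
    (ρ : Representation F A V) (σ : Representation F B W) :
    Representation F (A × B) (TensorProduct F V W) :=
  Representation.tprod
    (ρ.comp (MonoidHom.fst A B) : Representation F (A × B) V)
    (σ.comp (MonoidHom.snd A B) : Representation F (A × B) W)

/-- the index of the interval block of the composition `α` containing `x`
(blocks `{0, …, α₀ - 1}`, `{α₀, …, α₀ + α₁ - 1}`, …). -/
def blockOf (α : Ptn) (x : ℕ) : ℕ := sInf {i | x < ∑ j ∈ Finset.range (i + 1), α j}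

/-- the position of `x` inside its block: the column of `x` in the tableau obtained by
filling the Young diagram of `α` row by row with `0, 1, 2, …`. -/
def colOf (α : Ptn) (x : ℕ) : ℕ := x - ∑ j ∈ Finset.range (blockOf α x), α j

/-- the Young subgroup `Σ_α ≤ Σ_n`: permutations preserving each interval block. -/
def youngSubgroup (α : Ptn) (n : ℕ) : Subgroup (Equiv.Perm (Fin n)) where
  carrier := {g | ∀ x : Fin n, blockOf α ((g x : Fin n) : ℕ) = blockOf α (x : ℕ)}
  one_mem' := by intro x; simp
  mul_mem' := by
    intro g h hg hh x
    simpa [Equiv.Perm.mul_apply] using (hg (h x)).trans (hh x)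
  inv_mem' := by
    intro g hg x
    simpa using (hg (g⁻¹ x)).symm

/-- the permutation module `M^α = 1 ↑_{Σ_α}^{Σ_n}`, realized on the cosets
`Σ_n / Σ_α` (whose elements are the `α`-tabloids). -/
def permRep (F : Type) [Field F] (α : Ptn) (n : ℕ) :
    Representation F (Equiv.Perm (Fin n))
      ((Equiv.Perm (Fin n) ⧸ youngSubgroup α n) →₀ F) where
  toFun g := Finsupp.lmapDomain F F (g • · : Equiv.Perm (Fin n) ⧸ youngSubgroup α n → _)
  map_one' := by
    ext x y
    simp
  map_mul' g h := by
    ext x y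
    simp [mul_smul]

/-- the polytabloid attached to the identity tableau: the signed column sum
`e_{t₀} = ∑_{τ ∈ C_{t₀}} sgn(τ) {τ t₀}`. -/
def spechtGen (F : Type) [Field F] (α : Ptn) (n : ℕ) :
    (Equiv.Perm (Fin n) ⧸ youngSubgroup α n) →₀ F :=
  ∑ τ ∈ Finset.univ.filter
      (fun τ : Equiv.Perm (Fin n) => ∀ x : Fin n, colOf α ((τ x : Fin n) : ℕ) = colOf α (x : ℕ)),
    ((Equiv.Perm.sign τ : ℤ) : F) • Finsupp.single (QuotientGroup.mk τ) 1

/-- the Specht module `S^α ⊆ M^α`: the span of all polytabloids. -/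
def spechtSubmodule (F : Type) [Field F] (α : Ptn) (n : ℕ) :
    Submodule F ((Equiv.Perm (Fin n) ⧸ youngSubgroup α n) →₀ F) :=
  Submodule.span F (Set.range fun g : Equiv.Perm (Fin n) => permRep F α n g (spechtGen F α n))

/-! ### Axiomatic interface for the modular irreducible representations `D^λ`

The family `D^λ` (for `λ` `p`-regular of `n`) is characterized (uniquely, up to
isomorphism) by: each `D^λ` is irreducible, they are pairwise non-isomorphic and exhaust
all irreducibles, `D^λ` occurs as a composition factor of the permutation module `M^λ`,
and every composition factor `D^μ` of `M^λ` satisfies `μ ≥ λ` lexicographically.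
The Mullineux map is characterized by `D^{λ^M} ≅ D^λ ⊗ sgn`. -/
structure SMTheory (F : Type) [Field F] (p n : ℕ) where
  D : Ptn → RepOb F (Equiv.Perm (Fin n))
  mull : Ptn → Ptn
  D_irr : ∀ lam, IsPtnOf lam n → PReg p lam → Irr (D lam).rep
  D_inj : ∀ lam mu, IsPtnOf lam n → PReg p lam → IsPtnOf mu n → PReg p mu →
    RepIso (D lam).rep (D mu).rep → lam = mu
  D_exh : ∀ (W : Type) [AddCommGroup W] [Module F W]
    (σ : Representation F (Equiv.Perm (Fin n)) W), Irr σ →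
      ∃ lam, IsPtnOf lam n ∧ PReg p lam ∧ RepIso σ (D lam).rep
  D_perm : ∀ lam, IsPtnOf lam n → PReg p lam → IsCompFactor (permRep F lam n) (D lam).rep
  D_tri : ∀ lam mu, IsPtnOf lam n → PReg p lam → IsPtnOf mu n → PReg p mu →
    IsCompFactor (permRep F lam n) (D mu).rep → lexLE lam mu
  mull_reg : ∀ lam, IsPtnOf lam n → PReg p lam →
    IsPtnOf (mull lam) n ∧ PReg p (mull lam)
  mull_spec : ∀ lam, IsPtnOf lam n → PReg p lam →
    RepIso (D (mull lam)).rep ((D lam).rep.tprod (sgnRep F n))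

/-!
The product of row swaps `r = (n-4, n-3)(n-2, n-1)` centralizes the Young subgroup
`Σ_{(n-4,2,2)}`, so `gΣ_{(n-4,2,2)} ↦ ρ(g r g⁻¹)` extends linearly to an `FΣ_n`-homomorphism
`ψ : M^{(n-4,2,2)} → End_F(V)`. On the standard polytabloid `e_{t₀}` it takes the value
`Σ_{τ ∈ C_{t₀}} sgn(τ) ρ(τ r τ⁻¹)`. A relabelling `π` of the points conjugates `Σ_{3,3}` onto
the column stabilizer `C_{t₀}` and `(2,5)(3,6)` onto `r`, whence `ψ(e_{t₀}) = ρ(π) x_{2²} ρ(π)⁻¹`,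
which is nonzero.
-/

def cosetConjLift (ρ : Representation F G V) (H : Subgroup G) (r : G)
    (hr : r ∈ Subgroup.centralizer H) : (G ⧸ H →₀ F) →ₗ[F] (V →ₗ[F] V) :=
  Finsupp.lift (V →ₗ[F] V) F (G ⧸ H) fun q =>
    Quotient.liftOn' q (fun g => ρ (g * r * g⁻¹)) fun g₁ g₂ hg => by
      obtain ⟨h, hh, rfl⟩ : ∃ h ∈ H, g₂ = g₁ * h :=
        ⟨g₁⁻¹ * g₂, QuotientGroup.leftRel_apply.mp hg, by group⟩
      have hrh : h * r * h⁻¹ = r := by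
        rw [Subgroup.mem_centralizer_iff.mp hr h hh, mul_inv_cancel_right]
      change ρ (g₁ * r * g₁⁻¹) = ρ (g₁ * h * r * (g₁ * h)⁻¹)
      rw [show g₁ * h * r * (g₁ * h)⁻¹ = g₁ * (h * r * h⁻¹) * g₁⁻¹ by group, hrh]

lemma cosetConjLift_single (ρ : Representation F G V) (H : Subgroup G) (r : G)
    (hr : r ∈ Subgroup.centralizer H) (g : G) (c : F) :
    cosetConjLift ρ H r hr (Finsupp.single (QuotientGroup.mk g) c) = c • ρ (g * r * g⁻¹) := by
  simp [cosetConjLift]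

lemma cosetConjLift_lmapDomain (ρ : Representation F G V) (H : Subgroup G) (r : G)
    (hr : r ∈ Subgroup.centralizer H) (g : G) (v : G ⧸ H →₀ F) :
    cosetConjLift ρ H r hr (Finsupp.lmapDomain F F (g • · : G ⧸ H → G ⧸ H) v) =
      ρ.linHom ρ g (cosetConjLift ρ H r hr v) := by
  induction v using Finsupp.induction_linear with
  | zero => simp
  | add u w hu hw => simp only [map_add, hu, hw]
  | single q c =>
    obtain ⟨k, rfl⟩ := QuotientGroup.mk_surjective q
    rw [Finsupp.lmapDomain_apply, Finsupp.mapDomain_single, MulAction.Quotient.smul_mk,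
      cosetConjLift_single, cosetConjLift_single, map_smul, Representation.linHom_apply]
    simp only [← Module.End.mul_eq_comp, ← map_mul, smul_eq_mul, mul_inv_rev, mul_assoc]

lemma rep_mul_mul_inv_ne_zero (ρ : Representation F G V) (g : G)
    {A : V →ₗ[F] V} (hA : A ≠ 0) : ρ g * A * ρ g⁻¹ ≠ 0 := by
  rw [← ρ.asGroupHom_apply, ← ρ.asGroupHom_apply, map_inv, ne_eq, Units.mul_left_eq_zero,
    Units.mul_right_eq_zero]
  exact hA

lemma cosetConjLift_spechtGen (α : Ptn) (n : ℕ) (ρ : Representation F (Equiv.Perm (Fin n)) V)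
    (r : Equiv.Perm (Fin n)) (hr : r ∈ Subgroup.centralizer (youngSubgroup α n)) :
    cosetConjLift ρ (youngSubgroup α n) r hr (spechtGen F α n) =
      ∑ τ ∈ Finset.univ.filter
          (fun τ : Equiv.Perm (Fin n) => ∀ x : Fin n, colOf α (τ x) = colOf α x),
        ((Equiv.Perm.sign τ : ℤ) : F) • ρ (τ * r * τ⁻¹) := by
  simp only [spechtGen, map_sum, map_smul, cosetConjLift_single, one_smul]

section PermConjugation

variable {α : Type} [DecidableEq α]

lemma conj_sum_sign_smul [Fintype α] (ρ : Representation F (Equiv.Perm α) V) (π r : Equiv.Perm α)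
    {P Q : Equiv.Perm α → Prop} [DecidablePred P] [DecidablePred Q]
    (hPQ : ∀ g, P g ↔ Q (π * g * π⁻¹)) :
    ρ π * (∑ g ∈ Finset.univ.filter P, ((Equiv.Perm.sign g : ℤ) : F) • ρ (g * r * g⁻¹)) *
        ρ π⁻¹ =
      ∑ τ ∈ Finset.univ.filter Q,
        ((Equiv.Perm.sign τ : ℤ) : F) • ρ (τ * (π * r * π⁻¹) * τ⁻¹) := by
  rw [Finset.mul_sum, Finset.sum_mul]
  refine Finset.sum_equiv (MulAut.conj π).toEquiv (by simpa using hPQ) fun g _ => ?_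
  have hsign : Equiv.Perm.sign (π * g * π⁻¹) = Equiv.Perm.sign g := by
    rw [map_mul, map_mul, map_inv, mul_inv_cancel_comm]
  have hconj : π * g * π⁻¹ * (π * r * π⁻¹) * (π * g * π⁻¹)⁻¹ = π * (g * r * g⁻¹) * π⁻¹ := by
    group
  simp only [MulEquiv.toEquiv_eq_coe, EquivLike.coe_coe, MulAut.conj_apply, hsign, hconj,
    map_mul, mul_smul_comm, smul_mul_assoc]

lemma swap_mem_centralizer {H : Subgroup (Equiv.Perm α)} {a b : α} (hab : a ≠ b)
    (hH : ∀ h ∈ H, ∀ x, (x = a ∨ x = b) → h x = a ∨ h x = b) :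
    Equiv.swap a b ∈ Subgroup.centralizer H := by
  refine Subgroup.mem_centralizer_iff.mpr fun h hh => ?_
  rw [← mul_inv_eq_iff_eq_mul, ← Equiv.swap_apply_apply]
  have hinj : h a ≠ h b := h.injective.ne hab
  rcases hH h hh a (Or.inl rfl) with ha | ha <;> rcases hH h hh b (Or.inr rfl) with hb | hb <;>
    simp_all [Equiv.swap_comm]

end PermConjugation

lemma forall_apply_conj_eq_iff {α β : Type} (f : α → β) (π g : Equiv.Perm α) :
    (∀ x, f ((π * g * π⁻¹) x) = f x) ↔ ∀ x, f (π (g x)) = f (π x) :=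
  ⟨fun H x => by simpa using H (π x), fun H x => by simpa using H (π⁻¹ x)⟩

lemma blockOf_eq_of_lt {α : Ptn} {x k : ℕ} (hle : ∑ j ∈ Finset.range k, α j ≤ x)
    (hlt : x < ∑ j ∈ Finset.range (k + 1), α j) : blockOf α x = k := by
  refine le_antisymm (Nat.sInf_le hlt) (le_csInf ⟨k, hlt⟩ fun i hi => ?_)
  by_contra! hik
  have hmono : ∑ j ∈ Finset.range (i + 1), α j ≤ ∑ j ∈ Finset.range k, α j :=
    Finset.sum_le_sum_of_subset (Finset.range_subset_range.mpr hik)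
  exact lt_irrefl x (hi.trans_le (hmono.trans hle))

lemma blockOf_threeRow {a b c x : ℕ} (hx : x < a + b + c) :
    blockOf (threeRow a b c) x = if x < a then 0 else if x < a + b then 1 else 2 := by
  split_ifs <;> apply blockOf_eq_of_lt <;>
    simp [Finset.sum_range_succ, threeRow] <;> omega

lemma colOf_threeRow {a b c x : ℕ} (hx : x < a + b + c) :
    colOf (threeRow a b c) x = if x < a then x else if x < a + b then x - a else x - (a + b) := by
  rw [colOf, blockOf_threeRow hx]
  split_ifs <;> simp [Finset.sum_range_succ, threeRow]

lemma mem_youngSubgroup_threeRow_iff {n : ℕ} (hn : 4 ≤ n) {h : Equiv.Perm (Fin n)} :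
    h ∈ youngSubgroup (threeRow (n - 4) 2 2) n ↔ ∀ x : Fin n,
      (if (h x : ℕ) < n - 4 then 0 else if (h x : ℕ) < n - 2 then 1 else 2) =
        if (x : ℕ) < n - 4 then 0 else if (x : ℕ) < n - 2 then 1 else 2 := by
  have hblock : ∀ y : Fin n, blockOf (threeRow (n - 4) 2 2) y =
      if (y : ℕ) < n - 4 then 0 else if (y : ℕ) < n - 2 then 1 else 2 := fun y => by
    rw [blockOf_threeRow (by omega), show n - 4 + 2 = n - 2 by omega]
  change (∀ x : Fin n, blockOf _ (h x) = blockOf _ x) ↔ _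
  simp only [hblock]

lemma rowSwaps_mem_centralizer {n : ℕ} (hn : 4 ≤ n) :
    Equiv.swap (⟨n - 4, by omega⟩ : Fin n) ⟨n - 3, by omega⟩ *
        Equiv.swap (⟨n - 2, by omega⟩ : Fin n) ⟨n - 1, by omega⟩ ∈
      Subgroup.centralizer (youngSubgroup (threeRow (n - 4) 2 2) n) := by
  refine Subgroup.mul_mem _ (swap_mem_centralizer (by simp; omega) ?_)
    (swap_mem_centralizer (by simp; omega) ?_)
  all_goals
    intro h hh x hx
    have hblock := (mem_youngSubgroup_threeRow_iff hn).mp hh x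
    have hlt := (h x).isLt
    simp only [Fin.ext_iff] at hx ⊢
    split_ifs at hblock <;> omega

/-- The relabelling `π`: it sends `0, 1, 2` onto the first column `0, n-4, n-2` of the
row-by-row tableau `t₀` of shape `(n-4,2,2)`, `3, 4, 5` onto its second column `1, n-3, n-1`,
and the remaining points onto the singleton columns `2, …, n-5`. The pairing `1 ↦ n-4`,
`4 ↦ n-3`, `2 ↦ n-2`, `5 ↦ n-1` makes it conjugate `(1,4)(2,5)` to the row swaps. -/
def relabel (n x : ℕ) : ℕ :=
  if x = 0 then 0 else if x = 1 then n - 4 else if x = 2 then n - 2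
  else if x = 3 then 1 else if x = 4 then n - 3 else if x = 5 then n - 1 else x - 4

lemma relabel_lt {n x : ℕ} (hn : 6 ≤ n) (hx : x < n) : relabel n x < n := by
  unfold relabel; split_ifs <;> omega

lemma relabel_injective {n : ℕ} (hn : 6 ≤ n) :
    Function.Injective fun x : Fin n => (⟨relabel n x, relabel_lt hn x.isLt⟩ : Fin n) := by
  intro x y hxy
  simp only [Fin.mk.injEq, relabel] at hxy
  have hx := x.isLt
  have hy := y.isLt
  ext
  split_ifs at hxy <;> omega

def relabelPerm (n : ℕ) (hn : 6 ≤ n) : Equiv.Perm (Fin n) :=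
  Equiv.ofBijective _ (Finite.injective_iff_bijective.mp (relabel_injective hn))

lemma relabelPerm_val {n : ℕ} (hn : 6 ≤ n) (x : Fin n) :
    (relabelPerm n hn x : ℕ) = relabel n x := rfl

lemma colOf_relabelPerm {n : ℕ} (hn : 6 ≤ n) (x : Fin n) :
    colOf (threeRow (n - 4) 2 2) (relabelPerm n hn x) =
      if (x : ℕ) < 3 then 0 else if (x : ℕ) < 6 then 1 else (x : ℕ) - 4 := by
  have hx := x.isLt
  have hπx := relabel_lt hn hx
  rw [relabelPerm_val, colOf_threeRow (by omega)]
  unfold relabel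
  split_ifs <;> omega

lemma relabelPerm_conj_swaps {n : ℕ} (hn : 6 ≤ n) {a b c d : Fin n} (ha : (a : ℕ) = 1)
    (hb : (b : ℕ) = 4) (hc : (c : ℕ) = 2) (hd : (d : ℕ) = 5) :
    relabelPerm n hn * (Equiv.swap a b * Equiv.swap c d) * (relabelPerm n hn)⁻¹ =
      Equiv.swap (⟨n - 4, by omega⟩ : Fin n) ⟨n - 3, by omega⟩ *
        Equiv.swap (⟨n - 2, by omega⟩ : Fin n) ⟨n - 1, by omega⟩ := by
  rw [show ∀ π σ τ : Equiv.Perm (Fin n), π * (σ * τ) * π⁻¹ = π * σ * π⁻¹ * (π * τ * π⁻¹) from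
    fun _ _ _ => by group, ← Equiv.swap_apply_apply, ← Equiv.swap_apply_apply]
  congr 2 <;> ext <;> simp [relabelPerm_val, relabel, ha, hb, hc, hd]

lemma sigma33_iff_conj_preserves_colOf {n : ℕ} (hn : 6 ≤ n) (g : Equiv.Perm (Fin n)) :
    (∀ x : Fin n, ((x : ℕ) < 3 → ((g x : Fin n) : ℕ) < 3) ∧
      (3 ≤ (x : ℕ) → (x : ℕ) < 6 → 3 ≤ ((g x : Fin n) : ℕ) ∧ ((g x : Fin n) : ℕ) < 6) ∧
      (6 ≤ (x : ℕ) → g x = x)) ↔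
    ∀ x : Fin n,
      colOf (threeRow (n - 4) 2 2) ((relabelPerm n hn * g * (relabelPerm n hn)⁻¹) x) =
        colOf (threeRow (n - 4) 2 2) x := by
  rw [forall_apply_conj_eq_iff (fun x : Fin n => colOf _ (x : ℕ))]
  simp only [colOf_relabelPerm, Fin.ext_iff]
  refine forall_congr' fun x => ⟨fun ⟨H₁, H₂, H₃⟩ => ?_, fun H => ?_⟩
  · rcases lt_or_ge (x : ℕ) 3 with hx | hx
    · rw [if_pos hx, if_pos (H₁ hx)]
    rcases lt_or_ge (x : ℕ) 6 with hx' | hx'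
    · have := H₂ hx hx'; split_ifs <;> omega
    · have := H₃ hx'; split_ifs <;> omega
  · split_ifs at H <;> omega

/-- Points are 0-indexed here, so `Σ_{3,3}` permutes `{0,1,2}` and `{3,4,5}` and fixes the
remaining points, and `(2,5)(3,6)` becomes the product of the transpositions `(1,4)` and
`(2,5)`. -/
theorem statement_16 (F : Type) [Field F]
    (n : ℕ) (hn : 6 ≤ n)
    (V : Type) [AddCommGroup V] [Module F V]
    (ρ : Representation F (Equiv.Perm (Fin n)) V)
    (hx : (∑ g ∈ Finset.univ.filter
        (fun g : Equiv.Perm (Fin n) => ∀ x : Fin n,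
          ((x : ℕ) < 3 → ((g x : Fin n) : ℕ) < 3) ∧
          (3 ≤ (x : ℕ) → (x : ℕ) < 6 → 3 ≤ ((g x : Fin n) : ℕ) ∧ ((g x : Fin n) : ℕ) < 6) ∧
          (6 ≤ (x : ℕ) → g x = x)),
        ((Equiv.Perm.sign g : ℤ) : F) •
          ρ (g * (Equiv.swap (⟨1, by omega⟩ : Fin n) ⟨4, by omega⟩ *
                  Equiv.swap (⟨2, by omega⟩ : Fin n) ⟨5, by omega⟩) * g⁻¹)) ≠ 0) :
    ∃ ψ : ((Equiv.Perm (Fin n) ⧸ youngSubgroup (threeRow (n - 4) 2 2) n) →₀ F) →ₗ[F]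
        (V →ₗ[F] V),
      IsRepHom (permRep F (threeRow (n - 4) 2 2) n) (ρ.linHom ρ) ψ ∧
      ∃ v ∈ spechtSubmodule F (threeRow (n - 4) 2 2) n, ψ v ≠ 0 := by
  have hr := rowSwaps_mem_centralizer (by omega : 4 ≤ n)
  refine ⟨cosetConjLift ρ _ _ hr, fun g v => cosetConjLift_lmapDomain ρ _ _ hr g v,
    spechtGen F _ n, Submodule.subset_span ⟨1, by simp⟩, ?_⟩
  rw [cosetConjLift_spechtGen, ← relabelPerm_conj_swaps hn,
    ← conj_sum_sign_smul ρ _ _ (sigma33_iff_conj_preserves_colOf hn)]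
  · exact rep_mul_mul_inv_ne_zero ρ _ hx
  all_goals rfl

end IrrTensor
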